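/- Assume β ∈ [0,1] and M > 6. There exists a constant C > 0 (depending only on β and M) such that for all ω₁ > 1 one has C₁²³⁴[n⁰¹, n⁰¹, n⁰¹](ω₁) ≤ C · ω₁^{3β + 1 − M}. -/
import Mathlib


open MeasureTheory Real

noncomputable section

/-- Japanese bracket ⟨ω⟩ = (1 + ω²)^{1/2}. -/
def jb (ω : ℝ) : ℝ := Real.sqrt (1 + ω ^ 2)

/-- n⁰¹(ω) = ⟨ω⟩^{-M/2}. -/
def n01 (M : ℝ) (ω : ℝ) : ℝ := jb ω ^ (-(M / 2))

/-- The operator C₂₁²³⁴, with ω₂ = ω₃ + ω₄ − ω₁. -/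
def C21op (β : ℝ) (k l m : ℝ → ℝ) (ω₁ : ℝ) : ℝ :=
  64 * π ^ 3 * ω₁ ^ (β - 1/2) *
    ∫ ω₃ in (0:ℝ)..(ω₁ / 2), ∫ ω₄ in (ω₁ - ω₃)..ω₁,
      (ω₃ + ω₄ - ω₁) ^ (β + 1/2) * ω₃ ^ β * ω₄ ^ β *
        (k (ω₃ + ω₄ - ω₁) * l ω₃ * m ω₄)

/-- The operator C₂₂²³⁴, with ω₂ = ω₃ + ω₄ − ω₁. -/
def C22op (β : ℝ) (k l m : ℝ → ℝ) (ω₁ : ℝ) : ℝ :=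
  64 * π ^ 3 * ω₁ ^ (β - 1/2) *
    ∫ ω₃ in (ω₁ / 2)..ω₁, ∫ ω₄ in ω₃..ω₁,
      (ω₃ + ω₄ - ω₁) ^ (β + 1/2) * ω₃ ^ β * ω₄ ^ β *
        (k (ω₃ + ω₄ - ω₁) * l ω₃ * m ω₄)

/-- The operator C₃²³⁴, with ω₂ = ω₃ + ω₄ − ω₁. -/
def C3op (β : ℝ) (k l m : ℝ → ℝ) (ω₁ : ℝ) : ℝ :=
  64 * π ^ 3 * ω₁ ^ (β - 1/2) *
    ∫ ω₃ in (0:ℝ)..ω₁, ∫ ω₄ in Set.Ioi ω₁,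
      (ω₃ + ω₄ - ω₁) ^ β * ω₃ ^ (β + 1/2) * ω₄ ^ β *
        (k (ω₃ + ω₄ - ω₁) * l ω₃ * m ω₄)

/-- The operator C₁²³⁴, with ω₂ = ω₃ + ω₄ − ω₁. -/
def C1op (β : ℝ) (k l m : ℝ → ℝ) (ω₁ : ℝ) : ℝ :=
  64 * π ^ 3 * ω₁ ^ β *
    ∫ ω₃ in Set.Ioi ω₁, ∫ ω₄ in Set.Ioi ω₃,
      (ω₃ + ω₄ - ω₁) ^ β * ω₃ ^ β * ω₄ ^ β *
        (k (ω₃ + ω₄ - ω₁) * l ω₃ * m ω₄)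

/-- The full domain of integration {0 ≤ ω₃ ≤ ω₄, ω₃ + ω₄ ≥ ω₁} ⊂ ℝ². -/
def Dom (ω₁ : ℝ) : Set (ℝ × ℝ) := {p | 0 ≤ p.1 ∧ p.1 ≤ p.2 ∧ ω₁ ≤ p.1 + p.2}

/-- The cross-section factor min{√ω₁, √ω₂, √ω₃}, with ω₂ = ω₃ + ω₄ − ω₁,
where p = (ω₃, ω₄). -/
def crossMin (ω₁ : ℝ) (p : ℝ × ℝ) : ℝ :=
  min (Real.sqrt ω₁) (min (Real.sqrt (p.1 + p.2 - ω₁)) (Real.sqrt p.1))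

/-- The operator C^{j₁j₂j₃}[k,l,m](ω₁) where the factor is k(ω_{j₁}) l(ω_{j₂}) m(ω_{j₃}),
with ω₂ = ω₃ + ω₄ − ω₁ and p = (ω₃, ω₄); here the selection of frequencies is passed
as a function `sel : (ℝ × ℝ) → ℝ × ℝ × ℝ` giving (ω_{j₁}, ω_{j₂}, ω_{j₃}). -/
def Cfull (β : ℝ) (k l m : ℝ → ℝ) (sel : ℝ → ℝ × ℝ → ℝ × ℝ × ℝ) (ω₁ : ℝ) : ℝ :=
  64 * π ^ 3 * ω₁ ^ (β - 1/2) *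
    ∫ p in Dom ω₁,
      ((p.1 + p.2 - ω₁) * p.1 * p.2) ^ β * crossMin ω₁ p *
        (k (sel ω₁ p).1 * l (sel ω₁ p).2.1 * m (sel ω₁ p).2.2)

/-- C²³⁴[k,l,m](ω₁): integrand k(ω₂) l(ω₃) m(ω₄). -/
def C234 (β : ℝ) (k l m : ℝ → ℝ) : ℝ → ℝ :=
  Cfull β k l m (fun ω₁ p => (p.1 + p.2 - ω₁, p.1, p.2))

/-- C¹²⁴[k,l,m](ω₁): integrand k(ω₁) l(ω₂) m(ω₄). -/
def C124 (β : ℝ) (k l m : ℝ → ℝ) : ℝ → ℝ :=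
  Cfull β k l m (fun ω₁ p => (ω₁, p.1 + p.2 - ω₁, p.2))

/-- C¹³⁴[k,l,m](ω₁): integrand k(ω₁) l(ω₃) m(ω₄). -/
def C134 (β : ℝ) (k l m : ℝ → ℝ) : ℝ → ℝ :=
  Cfull β k l m (fun ω₁ p => (ω₁, p.1, p.2))

/-- C¹²³[k,l,m](ω₁): integrand k(ω₁) l(ω₂) m(ω₃). -/
def C123 (β : ℝ) (k l m : ℝ → ℝ) : ℝ → ℝ :=
  Cfull β k l m (fun ω₁ p => (ω₁, p.1 + p.2 - ω₁, p.1))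

/-- Upper bound: C₁²³⁴[n⁰¹,n⁰¹,n⁰¹](ω₁) ≲ ω₁^{3β + 1 − M} for ω₁ > 1. -/
theorem C1_upper_bound (β M : ℝ) (hβ0 : 0 ≤ β) (hβ1 : β ≤ 1) (hM : 6 < M) :
    ∃ C : ℝ, 0 < C ∧ ∀ ω₁ : ℝ, 1 < ω₁ →
      C1op β (n01 M) (n01 M) (n01 M) ω₁ ≤ C * ω₁ ^ (3 * β + 1 - M) := by
  set a := β - M / 2 with ha_def
  have ha2 : a < -2 := by rw [ha_def]; linarith
  have h2a : 2 * a < -1 := by linarith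
  have h3a : 3 * a + 1 < -1 := by linarith
  have hc1 : (0:ℝ) < -(2 * a + 1) := by linarith
  have hc2 : (0:ℝ) < -(3 * a + 2) := by linarith
  have hπ := Real.pi_pos
  have n01_nonneg : ∀ x : ℝ, 0 ≤ n01 M x := fun x =>
    Real.rpow_nonneg (Real.sqrt_nonneg _) _
  have key : ∀ x : ℝ, 1 ≤ x → x ^ β * n01 M x ≤ x ^ a := by
    intro x hx
    have hx0 : 0 < x := by linarith
    have hjb : x ≤ jb x := by
      calc x = Real.sqrt (x ^ 2) := (Real.sqrt_sq hx0.le).symm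
        _ ≤ Real.sqrt (1 + x ^ 2) := Real.sqrt_le_sqrt (by linarith)
    have h1 : n01 M x ≤ x ^ (-(M / 2)) :=
      Real.rpow_le_rpow_of_nonpos hx0 hjb (by linarith)
    calc x ^ β * n01 M x ≤ x ^ β * x ^ (-(M / 2)) :=
          mul_le_mul_of_nonneg_left h1 (Real.rpow_nonneg hx0.le _)
      _ = x ^ a := by rw [← Real.rpow_add hx0, ha_def]; ring_nf
  have mono : ∀ y x : ℝ, 0 < y → y ≤ x → x ^ a ≤ y ^ a := fun y x hy hyx =>
    Real.rpow_le_rpow_of_nonpos hy hyx (by linarith)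
  refine ⟨64 * π ^ 3 * (-(2 * a + 1))⁻¹ * (-(3 * a + 2))⁻¹,
    mul_pos (mul_pos (by positivity) (inv_pos.2 hc1)) (inv_pos.2 hc2), ?_⟩
  intro ω₁ hω₁
  have hω₁0 : 0 < ω₁ := by linarith
  have inner_nonneg : ∀ ω₃ : ℝ, ω₃ ∈ Set.Ioi ω₁ →
      0 ≤ ∫ ω₄ in Set.Ioi ω₃, (ω₃ + ω₄ - ω₁) ^ β * ω₃ ^ β * ω₄ ^ β *
        (n01 M (ω₃ + ω₄ - ω₁) * n01 M ω₃ * n01 M ω₄) := by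
    intro ω₃ hω₃
    simp only [Set.mem_Ioi] at hω₃
    have hω₃0 : 0 < ω₃ := by linarith
    apply MeasureTheory.setIntegral_nonneg measurableSet_Ioi
    intro ω₄ hω₄
    simp only [Set.mem_Ioi] at hω₄
    have h2 : (0:ℝ) ≤ ω₃ + ω₄ - ω₁ := by linarith
    have h4 : (0:ℝ) ≤ ω₄ := by linarith
    exact mul_nonneg (mul_nonneg (mul_nonneg (Real.rpow_nonneg h2 _)
      (Real.rpow_nonneg hω₃0.le _)) (Real.rpow_nonneg h4 _))
      (mul_nonneg (mul_nonneg (n01_nonneg _) (n01_nonneg _)) (n01_nonneg _))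
  have inner_bound : ∀ ω₃ : ℝ, ω₃ ∈ Set.Ioi ω₁ →
      (∫ ω₄ in Set.Ioi ω₃, (ω₃ + ω₄ - ω₁) ^ β * ω₃ ^ β * ω₄ ^ β *
        (n01 M (ω₃ + ω₄ - ω₁) * n01 M ω₃ * n01 M ω₄))
      ≤ (-(2 * a + 1))⁻¹ * ω₃ ^ (3 * a + 1) := by
    intro ω₃ hω₃
    simp only [Set.mem_Ioi] at hω₃
    have hω₃1 : 1 < ω₃ := lt_trans hω₁ hω₃
    have hω₃0 : 0 < ω₃ := by linarith
    have hle : (∫ ω₄ in Set.Ioi ω₃, (ω₃ + ω₄ - ω₁) ^ β * ω₃ ^ β * ω₄ ^ β *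
        (n01 M (ω₃ + ω₄ - ω₁) * n01 M ω₃ * n01 M ω₄))
        ≤ ∫ ω₄ in Set.Ioi ω₃, ω₃ ^ a * ω₄ ^ (2 * a) := by
      apply MeasureTheory.integral_mono_of_nonneg
      · filter_upwards [MeasureTheory.self_mem_ae_restrict
          (measurableSet_Ioi : MeasurableSet (Set.Ioi ω₃))] with ω₄ hω₄
        simp only [Set.mem_Ioi] at hω₄
        have h2 : (0:ℝ) ≤ ω₃ + ω₄ - ω₁ := by linarith
        have h4 : (0:ℝ) ≤ ω₄ := by linarith
        exact mul_nonneg (mul_nonneg (mul_nonneg (Real.rpow_nonneg h2 _)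
          (Real.rpow_nonneg hω₃0.le _)) (Real.rpow_nonneg h4 _))
          (mul_nonneg (mul_nonneg (n01_nonneg _) (n01_nonneg _)) (n01_nonneg _))
      · exact (integrableOn_Ioi_rpow_of_lt h2a hω₃0).const_mul _
      · filter_upwards [MeasureTheory.self_mem_ae_restrict
          (measurableSet_Ioi : MeasurableSet (Set.Ioi ω₃))] with ω₄ hω₄
        simp only [Set.mem_Ioi] at hω₄
        have hω₄0 : (0:ℝ) < ω₄ := by linarith
        have hω₄1 : 1 ≤ ω₄ := by linarith
        have h21 : 1 ≤ ω₃ + ω₄ - ω₁ := by linarith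
        have hb2 : (ω₃ + ω₄ - ω₁) ^ β * n01 M (ω₃ + ω₄ - ω₁) ≤ ω₄ ^ a :=
          le_trans (key _ h21) (mono ω₄ _ hω₄0 (by linarith))
        have hb3 : ω₃ ^ β * n01 M ω₃ ≤ ω₃ ^ a := key _ hω₃1.le
        have hb4 : ω₄ ^ β * n01 M ω₄ ≤ ω₄ ^ a := key _ hω₄1
        have nn3 : (0:ℝ) ≤ ω₃ ^ β * n01 M ω₃ :=
          mul_nonneg (Real.rpow_nonneg hω₃0.le _) (n01_nonneg _)
        have nn4 : (0:ℝ) ≤ ω₄ ^ β * n01 M ω₄ :=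
          mul_nonneg (Real.rpow_nonneg hω₄0.le _) (n01_nonneg _)
        have nn2 : (0:ℝ) ≤ (ω₃ + ω₄ - ω₁) ^ β * n01 M (ω₃ + ω₄ - ω₁) :=
          mul_nonneg (Real.rpow_nonneg (by linarith) _) (n01_nonneg _)
        calc (ω₃ + ω₄ - ω₁) ^ β * ω₃ ^ β * ω₄ ^ β *
            (n01 M (ω₃ + ω₄ - ω₁) * n01 M ω₃ * n01 M ω₄)
            = ((ω₃ + ω₄ - ω₁) ^ β * n01 M (ω₃ + ω₄ - ω₁)) *
              ((ω₃ ^ β * n01 M ω₃) * (ω₄ ^ β * n01 M ω₄)) := by ring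
          _ ≤ ω₄ ^ a * (ω₃ ^ a * ω₄ ^ a) :=
              mul_le_mul hb2 (mul_le_mul hb3 hb4 nn4 (Real.rpow_nonneg hω₃0.le _))
                (mul_nonneg nn3 nn4) (Real.rpow_nonneg hω₄0.le _)
          _ = ω₃ ^ a * ω₄ ^ (2 * a) := by
              rw [two_mul, Real.rpow_add hω₄0]; ring
    refine hle.trans (le_of_eq ?_)
    rw [MeasureTheory.integral_const_mul, integral_Ioi_rpow_of_lt h2a hω₃0]
    have hne : 2 * a + 1 ≠ 0 := by linarith
    have hexp : 3 * a + 1 = a + (2 * a + 1) := by ring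
    calc ω₃ ^ a * (-ω₃ ^ (2 * a + 1) / (2 * a + 1))
        = -(2 * a + 1)⁻¹ * (ω₃ ^ a * ω₃ ^ (2 * a + 1)) := by ring
      _ = -(2 * a + 1)⁻¹ * ω₃ ^ (a + (2 * a + 1)) := by rw [← Real.rpow_add hω₃0]
      _ = (-(2 * a + 1))⁻¹ * ω₃ ^ (3 * a + 1) := by rw [inv_neg, ← hexp]
  have outer : (∫ ω₃ in Set.Ioi ω₁, ∫ ω₄ in Set.Ioi ω₃,
      (ω₃ + ω₄ - ω₁) ^ β * ω₃ ^ β * ω₄ ^ β *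
        (n01 M (ω₃ + ω₄ - ω₁) * n01 M ω₃ * n01 M ω₄))
      ≤ (-(2 * a + 1))⁻¹ * ((-(3 * a + 2))⁻¹ * ω₁ ^ (3 * a + 2)) := by
    have hle : (∫ ω₃ in Set.Ioi ω₁, ∫ ω₄ in Set.Ioi ω₃,
        (ω₃ + ω₄ - ω₁) ^ β * ω₃ ^ β * ω₄ ^ β *
          (n01 M (ω₃ + ω₄ - ω₁) * n01 M ω₃ * n01 M ω₄))
        ≤ ∫ ω₃ in Set.Ioi ω₁, (-(2 * a + 1))⁻¹ * ω₃ ^ (3 * a + 1) := by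
      apply MeasureTheory.integral_mono_of_nonneg
      · filter_upwards [MeasureTheory.self_mem_ae_restrict
          (measurableSet_Ioi : MeasurableSet (Set.Ioi ω₁))] with ω₃ hω₃
        exact inner_nonneg ω₃ hω₃
      · exact (integrableOn_Ioi_rpow_of_lt h3a hω₁0).const_mul _
      · filter_upwards [MeasureTheory.self_mem_ae_restrict
          (measurableSet_Ioi : MeasurableSet (Set.Ioi ω₁))] with ω₃ hω₃
        exact inner_bound ω₃ hω₃
    refine hle.trans (le_of_eq ?_)
    rw [MeasureTheory.integral_const_mul, integral_Ioi_rpow_of_lt h3a hω₁0]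
    have hne : 3 * a + 2 ≠ 0 := by linarith
    have hexp : 3 * a + 1 + 1 = 3 * a + 2 := by ring
    rw [hexp]
    simp only [inv_neg]
    ring
  calc C1op β (n01 M) (n01 M) (n01 M) ω₁
      = 64 * π ^ 3 * ω₁ ^ β * ∫ ω₃ in Set.Ioi ω₁, ∫ ω₄ in Set.Ioi ω₃,
        (ω₃ + ω₄ - ω₁) ^ β * ω₃ ^ β * ω₄ ^ β *
          (n01 M (ω₃ + ω₄ - ω₁) * n01 M ω₃ * n01 M ω₄) := rfl
    _ ≤ 64 * π ^ 3 * ω₁ ^ β *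
        ((-(2 * a + 1))⁻¹ * ((-(3 * a + 2))⁻¹ * ω₁ ^ (3 * a + 2))) :=
        mul_le_mul_of_nonneg_left outer (by positivity)
    _ = 64 * π ^ 3 * (-(2 * a + 1))⁻¹ * (-(3 * a + 2))⁻¹ * (ω₁ ^ β * ω₁ ^ (3 * a + 2)) := by
        ring
    _ = 64 * π ^ 3 * (-(2 * a + 1))⁻¹ * (-(3 * a + 2))⁻¹ * ω₁ ^ (β + (3 * a + 2)) := by
        rw [← Real.rpow_add hω₁0]
    _ ≤ 64 * π ^ 3 * (-(2 * a + 1))⁻¹ * (-(3 * a + 2))⁻¹ * ω₁ ^ (3 * β + 1 - M) := by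
        apply mul_le_mul_of_nonneg_left
          (Real.rpow_le_rpow_of_exponent_le hω₁.le (by rw [ha_def]; linarith))
        positivity
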